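/- Let N ≥ 2 and Γ the graded path algebra of the previous context (doubled A_N quiver with extra degree-N arrows yᵢ: i → N+1−i, relations (a)–(d)). Then for all 1 ≤ i, j ≤ N and k ≥ 0, dim_F e_i Γ_k e_j ≤ 1, and it equals 1 only if, writing k = qN + r with 0 ≤ r < N, either q is even and |i−j| ≤ r ≤ N−1−|N+1−i−j| with r ≡ i−j (mod 2), or q is odd and the same condition holds with i replaced by N+1−i. -/

import Mathlib

/-! The graded path algebra `Γ` of the quiver with vertices `1, …, N`, degree-1 arrows
`xᵢ : i → i+1`, `xᵢ* : i+1 → i` and degree-`N` arrows `yᵢ : i → N+1−i`, modulo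
(a) `x₁x₁* = x_{N-1}*x_{N-1} = 0`, (b) `xᵢ*xᵢ = x_{i+1}x_{i+1}*`,
(c) `xᵢ y_{i+1} = yᵢ x_{N-i}*`, (d) `xᵢ* yᵢ = y_{i+1} x_{N-i}`
(concatenation-of-paths convention). -/

/-- A step of a path: `up` is some `x`, `down` is some `x*`, `flip` is some `y`. -/
inductive BStep : Type
  | up : BStep
  | down : BStep
  | flip : BStep
deriving DecidableEq

/-- The endpoint of a single step starting at vertex `v`. -/
def stepNext (N : ℕ) (v : ℤ) : BStep → ℤ
  | BStep.up => v + 1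
  | BStep.down => v - 1
  | BStep.flip => (N : ℤ) + 1 - v

/-- The degree of a step: `x` and `x*` have degree `1`, `y` has degree `N`. -/
def stepDeg (N : ℕ) : BStep → ℕ
  | BStep.up => 1
  | BStep.down => 1
  | BStep.flip => N

/-- All vertices visited lie in `{1, …, N}`. -/
def okStepsY (N : ℕ) : ℤ → List BStep → Prop
  | i, [] => 1 ≤ i ∧ i ≤ (N : ℤ)
  | i, b :: L => 1 ≤ i ∧ i ≤ (N : ℤ) ∧ okStepsY N (stepNext N i b) L

/-- The endpoint of the step list `L` starting at `i`. -/
def targetY (N : ℕ) : ℤ → List BStep → ℤ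
  | i, [] => i
  | i, b :: L => targetY N (stepNext N i b) L

/-- The total degree of a step list. -/
def degY (N : ℕ) (L : List BStep) : ℕ := (L.map (stepDeg N)).sum

/-- `L` encodes a path from `i` to `j` of total degree `k`. -/
def IsPathFromY (N : ℕ) (i j : ℤ) (k : ℕ) (L : List BStep) : Prop :=
  okStepsY N i L ∧ targetY N i L = j ∧ degY N L = k

/-- The set of paths from `i` to `j` of degree `k`. -/
def PathIdxY (N : ℕ) (i j : ℤ) (k : ℕ) : Type :=
  {L : List BStep // IsPathFromY N i j k L}

/-- The relators spanning the degree-`k`, `(i,j)`-component of the ideal generated by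
the relations (a)–(d) inside `e_i (FQ)_k e_j`. -/
def relatorsY (F : Type*) [Field F] (N : ℕ) (i j : ℤ) (k : ℕ) :
    Set (PathIdxY N i j k →₀ F) :=
  {v | ∃ A B : List BStep,
    -- (a) `x₁x₁* = 0`
    (∃ h : IsPathFromY N i j k (A ++ [BStep.up, BStep.down] ++ B),
      targetY N i A = 1 ∧ v = Finsupp.single ⟨A ++ [BStep.up, BStep.down] ++ B, h⟩ 1) ∨
    -- (a) `x_{N-1}*x_{N-1} = 0`
    (∃ h : IsPathFromY N i j k (A ++ [BStep.down, BStep.up] ++ B),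
      targetY N i A = (N : ℤ) ∧
      v = Finsupp.single ⟨A ++ [BStep.down, BStep.up] ++ B, h⟩ 1) ∨
    -- (b) `xᵢ*xᵢ = x_{i+1}x_{i+1}*` at an interior vertex
    (∃ (h1 : IsPathFromY N i j k (A ++ [BStep.down, BStep.up] ++ B))
        (h2 : IsPathFromY N i j k (A ++ [BStep.up, BStep.down] ++ B)),
      2 ≤ targetY N i A ∧ targetY N i A ≤ (N : ℤ) - 1 ∧
      v = Finsupp.single ⟨A ++ [BStep.down, BStep.up] ++ B, h1⟩ 1
          - Finsupp.single ⟨A ++ [BStep.up, BStep.down] ++ B, h2⟩ 1) ∨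
    -- (c) `xᵢ y_{i+1} = yᵢ x_{N-i}*`
    (∃ (h1 : IsPathFromY N i j k (A ++ [BStep.up, BStep.flip] ++ B))
        (h2 : IsPathFromY N i j k (A ++ [BStep.flip, BStep.down] ++ B)),
      1 ≤ targetY N i A ∧ targetY N i A ≤ (N : ℤ) - 1 ∧
      v = Finsupp.single ⟨A ++ [BStep.up, BStep.flip] ++ B, h1⟩ 1
          - Finsupp.single ⟨A ++ [BStep.flip, BStep.down] ++ B, h2⟩ 1) ∨
    -- (d) `xᵢ* yᵢ = y_{i+1} x_{N-i}`
    (∃ (h1 : IsPathFromY N i j k (A ++ [BStep.down, BStep.flip] ++ B))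
        (h2 : IsPathFromY N i j k (A ++ [BStep.flip, BStep.up] ++ B)),
      2 ≤ targetY N i A ∧ targetY N i A ≤ (N : ℤ) ∧
      v = Finsupp.single ⟨A ++ [BStep.down, BStep.flip] ++ B, h1⟩ 1
          - Finsupp.single ⟨A ++ [BStep.flip, BStep.up] ++ B, h2⟩ 1)}

/-- The component `e_i Γ_k e_j` of the quotient graded path algebra `Γ = FQ/⟨I⟩`. -/
def PathCompY (F : Type*) [Field F] (N : ℕ) (i j : ℤ) (k : ℕ) :=
  (PathIdxY N i j k →₀ F) ⧸ Submodule.span F (relatorsY F N i j k)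

noncomputable instance (F : Type*) [Field F] (N : ℕ) (i j : ℤ) (k : ℕ) :
    AddCommGroup (PathCompY F N i j k) :=
  Submodule.Quotient.addCommGroup _

noncomputable instance (F : Type*) [Field F] (N : ℕ) (i j : ℤ) (k : ℕ) :
    Module F (PathCompY F N i j k) :=
  Submodule.Quotient.module _

/-- The class of a path in `e_i Γ_k e_j`. -/
noncomputable def pathClassY (F : Type*) [Field F] {N : ℕ} {i j : ℤ} {k : ℕ}
    (p : PathIdxY N i j k) : PathCompY F N i j k :=
  Submodule.Quotient.mk (Finsupp.single p 1)

/-- Normal form `yᵢᵃ · γ₁ · γ₂`: an optional initial `y`, then a product of `x`'s and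
`x*`'s only, then a loop of `y`'s of degree a multiple of `2N`. -/
def NormalFormY (L : List BStep) : Prop :=
  ∃ (a : Bool) (M : List BStep) (t : ℕ),
    L = (cond a [BStep.flip] []) ++ M ++ List.replicate (2 * t) BStep.flip ∧
      ∀ s ∈ M, s ≠ BStep.flip

/-! Extend the class of a path by zero to all words in the arrows. The relations then hold
at every vertex: at a boundary vertex one side is killed by (a) and the other is not a path.
So `x` and `x*` commute, and moving an arrow past a `y` exchanges `x` and `x*`; hence every
word has the same class as `yᵐ (x*)ᵖ x^q` and as `yᵐ x^q (x*)ᵖ`. If that class is nonzero,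
both words are paths, which forces `p + q < N`; so `m = k / N`, `p + q = k % N`, and `q - p`
is the distance from the vertex reached after the `y`'s to `j`. Thus all nonzero classes
coincide, and the bounds on the descent and on the ascent are the inequalities of the
theorem. -/

open BStep List

theorem finrank_le_one_of_span_eq_top {K V ι : Type*} [DivisionRing K] [AddCommGroup V]
    [Module K V] {f : ι → V} (hspan : Submodule.span K (Set.range f) = ⊤)
    (hf : ∀ a b, f a ≠ 0 → f b ≠ 0 → f a = f b) : Module.finrank K V ≤ 1 := by
  obtain ⟨v, hv⟩ : ∃ v, ∀ a, f a = 0 ∨ f a = v := by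
    by_cases h : ∃ a, f a ≠ 0
    · obtain ⟨a, ha⟩ := h
      exact ⟨f a, fun b => or_iff_not_imp_left.2 fun hb => hf b a hb ha⟩
    · push Not at h
      exact ⟨0, fun a => Or.inl (h a)⟩
  refine finrank_le_one v fun w => Submodule.mem_span_singleton.1 ?_
  have hle : Set.range f ⊆ insert 0 {v} := by
    rintro _ ⟨a, rfl⟩
    exact hv a
  rw [← Submodule.span_insert_zero]
  exact Submodule.span_mono hle (hspan ▸ Submodule.mem_top)

theorem exists_ne_zero_of_span_eq_top {K V ι : Type*} [DivisionRing K] [AddCommGroup V]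
    [Module K V] [Nontrivial V] {f : ι → V} (hspan : Submodule.span K (Set.range f) = ⊤) :
    ∃ a, f a ≠ 0 := by
  by_contra! h
  rw [Submodule.span_eq_bot.2 (by rintro _ ⟨a, rfl⟩; exact h a)] at hspan
  exact bot_ne_top hspan

section Paths

variable {N : ℕ} {i j : ℤ} {k : ℕ}

lemma targetY_append (a : ℤ) (A B : List BStep) :
    targetY N a (A ++ B) = targetY N (targetY N a A) B := by
  induction A generalizing a with
  | nil => rfl
  | cons _ _ ih => exact ih _

lemma okStepsY.bounds {a : ℤ} {L : List BStep} (h : okStepsY N a L) : 1 ≤ a ∧ a ≤ (N : ℤ) := by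
  cases L with
  | nil => exact h
  | cons _ _ => exact ⟨h.1, h.2.1⟩

lemma okStepsY.targetY_bounds {a : ℤ} {L : List BStep} (h : okStepsY N a L) :
    1 ≤ targetY N a L ∧ targetY N a L ≤ (N : ℤ) := by
  induction L generalizing a with
  | nil => exact h
  | cons _ _ ih => exact ih h.2.2

lemma okStepsY_append {a : ℤ} {A B : List BStep} :
    okStepsY N a (A ++ B) ↔ okStepsY N a A ∧ okStepsY N (targetY N a A) B := by
  induction A generalizing a with
  | nil => exact ⟨fun h => ⟨h.bounds, h⟩, And.right⟩
  | cons _ _ ih => simp only [List.cons_append, okStepsY, targetY, ih, and_assoc]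

lemma degY_append (A B : List BStep) : degY N (A ++ B) = degY N A + degY N B := by
  simp [degY]

lemma IsPathFromY.okStepsY_middle {A X B : List BStep} (h : IsPathFromY N i j k (A ++ X ++ B)) :
    okStepsY N (targetY N i A) X :=
  (okStepsY_append.1 (okStepsY_append.1 h.1).1).2

lemma IsPathFromY.replace_middle {A X Y B : List BStep} (h : IsPathFromY N i j k (A ++ X ++ B))
    (hY : okStepsY N (targetY N i A) Y)
    (ht : targetY N (targetY N i A) Y = targetY N (targetY N i A) X)
    (hd : degY N Y = degY N X) : IsPathFromY N i j k (A ++ Y ++ B) := by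
  obtain ⟨hok, htarget, hdeg⟩ := h
  refine ⟨?_, ?_, ?_⟩
  all_goals simp only [okStepsY_append, targetY_append, degY_append] at hok htarget hdeg ⊢
  · exact ⟨⟨hok.1.1, hY⟩, ht ▸ hok.2⟩
  · rwa [ht]
  · rwa [hd]

end Paths

section WordClass

variable (F : Type*) [Field F] (N : ℕ) (i j : ℤ) (k : ℕ)

noncomputable def wordClass (L : List BStep) : PathCompY F N i j k :=
  open Classical in if h : IsPathFromY N i j k L then pathClassY F ⟨L, h⟩ else 0

variable {F N i j k}

lemma isPathFromY_of_wordClass_ne_zero {L : List BStep} (h : wordClass F N i j k L ≠ 0) :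
    IsPathFromY N i j k L := by
  by_contra hL
  exact h (dif_neg hL)

lemma wordClass_eq_zero_of_not_okStepsY {A X B : List BStep}
    (h : ¬ okStepsY N (targetY N i A) X) : wordClass F N i j k (A ++ X ++ B) = 0 :=
  dif_neg fun hp => h hp.okStepsY_middle

lemma wordClass_eq_zero_of_relator {L : List BStep}
    (h : ∀ hL : IsPathFromY N i j k L, Finsupp.single ⟨L, hL⟩ 1 ∈ relatorsY F N i j k) :
    wordClass F N i j k L = 0 := by
  unfold wordClass
  split_ifs with hL
  · exact (Submodule.Quotient.mk_eq_zero _).2 (Submodule.subset_span (h hL))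
  · rfl

lemma wordClass_eq_of_relator {A X Y B : List BStep}
    (hX : okStepsY N (targetY N i A) X) (hY : okStepsY N (targetY N i A) Y)
    (ht : targetY N (targetY N i A) X = targetY N (targetY N i A) Y)
    (hd : degY N X = degY N Y)
    (h : ∀ (hX : IsPathFromY N i j k (A ++ X ++ B)) (hY : IsPathFromY N i j k (A ++ Y ++ B)),
      Finsupp.single ⟨A ++ X ++ B, hX⟩ 1 - Finsupp.single ⟨A ++ Y ++ B, hY⟩ 1 ∈
        relatorsY F N i j k) :
    wordClass F N i j k (A ++ X ++ B) = wordClass F N i j k (A ++ Y ++ B) := by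
  by_cases hXp : IsPathFromY N i j k (A ++ X ++ B)
  · have hYp := hXp.replace_middle hY ht.symm hd.symm
    rw [wordClass, wordClass, dif_pos hXp, dif_pos hYp]
    exact (Submodule.Quotient.eq _).2 (Submodule.subset_span (h hXp hYp))
  · have hYp : ¬ IsPathFromY N i j k (A ++ Y ++ B) := fun hYp =>
      hXp (hYp.replace_middle hX ht hd)
    rw [wordClass, wordClass, dif_neg hXp, dif_neg hYp]

end WordClass

def WordEquiv (F : Type*) [Field F] (N : ℕ) (X Y : List BStep) : Prop :=
  ∀ (i j : ℤ) (k : ℕ) (A B : List BStep),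
    wordClass F N i j k (A ++ X ++ B) = wordClass F N i j k (A ++ Y ++ B)

namespace WordEquiv

variable {F : Type*} [Field F] {N : ℕ} {X Y Z : List BStep}

@[refl]
lemma refl (X : List BStep) : WordEquiv F N X X := fun _ _ _ _ _ => rfl

@[symm]
lemma symm (h : WordEquiv F N X Y) : WordEquiv F N Y X := fun i j k A B => (h i j k A B).symm

@[trans]
lemma trans (h : WordEquiv F N X Y) (h' : WordEquiv F N Y Z) : WordEquiv F N X Z :=
  fun i j k A B => (h i j k A B).trans (h' i j k A B)

lemma append_append (h : WordEquiv F N X Y) (C D : List BStep) :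
    WordEquiv F N (C ++ X ++ D) (C ++ Y ++ D) := fun i j k A B => by
  simpa only [List.append_assoc] using h i j k (A ++ C) (D ++ B)

lemma cons (h : WordEquiv F N X Y) (s : BStep) : WordEquiv F N (s :: X) (s :: Y) := by
  simpa using h.append_append [s] []

lemma wordClass_eq (h : WordEquiv F N X Y) (i j : ℤ) (k : ℕ) :
    wordClass F N i j k X = wordClass F N i j k Y := by
  simpa using h i j k [] []

end WordEquiv

section Relations

variable {F : Type*} [Field F] {N : ℕ}

theorem wordEquiv_up_down : WordEquiv F N [up, down] [down, up] := by
  intro i j k A B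
  set v := targetY N i A with hv
  by_cases h1 : v = 1
  · rw [wordClass_eq_zero_of_relator fun h => ⟨A, B, Or.inl ⟨h, h1, rfl⟩⟩,
      wordClass_eq_zero_of_not_okStepsY (by simp only [okStepsY, stepNext, ← hv]; omega)]
  by_cases hN : v = N
  · rw [wordClass_eq_zero_of_not_okStepsY (by simp only [okStepsY, stepNext, ← hv]; omega),
      wordClass_eq_zero_of_relator fun h => ⟨A, B, Or.inr (Or.inl ⟨h, hN, rfl⟩)⟩]
  by_cases hin : 2 ≤ v ∧ v ≤ N - 1
  · symm
    exact wordClass_eq_of_relator (by simp only [okStepsY, stepNext, ← hv]; omega)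
      (by simp only [okStepsY, stepNext, ← hv]; omega) (by simp [targetY, stepNext]) rfl
      fun h1 h2 => ⟨A, B, Or.inr (Or.inr (Or.inl ⟨h1, h2, hin.1, hin.2, rfl⟩))⟩
  · rw [wordClass_eq_zero_of_not_okStepsY (by simp only [okStepsY, stepNext, ← hv]; omega),
      wordClass_eq_zero_of_not_okStepsY (by simp only [okStepsY, stepNext, ← hv]; omega)]

theorem wordEquiv_up_flip : WordEquiv F N [up, flip] [flip, down] := by
  intro i j k A B
  set v := targetY N i A with hv
  by_cases hin : 1 ≤ v ∧ v ≤ N - 1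
  · exact wordClass_eq_of_relator (by simp only [okStepsY, stepNext, ← hv]; omega)
      (by simp only [okStepsY, stepNext, ← hv]; omega) (by simp [targetY, stepNext]; ring)
      (by simp [degY, stepDeg]; omega)
      fun h1 h2 => ⟨A, B, Or.inr (Or.inr (Or.inr (Or.inl ⟨h1, h2, hin.1, hin.2, rfl⟩)))⟩
  · rw [wordClass_eq_zero_of_not_okStepsY (by simp only [okStepsY, stepNext, ← hv]; omega),
      wordClass_eq_zero_of_not_okStepsY (by simp only [okStepsY, stepNext, ← hv]; omega)]

theorem wordEquiv_down_flip : WordEquiv F N [down, flip] [flip, up] := by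
  intro i j k A B
  set v := targetY N i A with hv
  by_cases hin : 2 ≤ v ∧ v ≤ N
  · exact wordClass_eq_of_relator (by simp only [okStepsY, stepNext, ← hv]; omega)
      (by simp only [okStepsY, stepNext, ← hv]; omega) (by simp [targetY, stepNext]; ring)
      (by simp [degY, stepDeg]; omega)
      fun h1 h2 => ⟨A, B, Or.inr (Or.inr (Or.inr (Or.inr ⟨h1, h2, hin.1, hin.2, rfl⟩)))⟩
  · rw [wordClass_eq_zero_of_not_okStepsY (by simp only [okStepsY, stepNext, ← hv]; omega),
      wordClass_eq_zero_of_not_okStepsY (by simp only [okStepsY, stepNext, ← hv]; omega)]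

end Relations

/-- The effect of moving an arrow past a `y`: relations (c) and (d) exchange `x` and `x*`. -/
def BStep.reflect : BStep → BStep
  | up => down
  | down => up
  | flip => flip

def valleyWord (m p q : ℕ) : List BStep := replicate m flip ++ replicate p down ++ replicate q up

def peakWord (m p q : ℕ) : List BStep := replicate m flip ++ replicate q up ++ replicate p down

section NormalForm

variable {F : Type*} [Field F] {N : ℕ}

theorem wordEquiv_cons_flip (s : BStep) : WordEquiv F N [s, flip] [flip, s.reflect] := by
  cases s with
  | up => exact wordEquiv_up_flip
  | down => exact wordEquiv_down_flip
  | flip => rfl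

theorem wordEquiv_cons_replicate_flip (s : BStep) (m : ℕ) :
    WordEquiv F N (s :: replicate m flip) (replicate m flip ++ [BStep.reflect^[m] s]) := by
  induction m generalizing s with
  | zero => rfl
  | succ m ih =>
    exact ((wordEquiv_cons_flip (F := F) (N := N) s).append_append [] (replicate m flip)).trans
      ((ih s.reflect).cons flip)

theorem wordEquiv_up_replicate_down (p : ℕ) :
    WordEquiv F N (up :: replicate p down) (replicate p down ++ [up]) := by
  induction p with
  | zero => rfl
  | succ p ih =>
    exact (wordEquiv_up_down.append_append [] (replicate p down)).trans (ih.cons down)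

theorem wordEquiv_valleyWord_peakWord (m p q : ℕ) :
    WordEquiv F N (valleyWord m p q) (peakWord m p q) := by
  suffices h : WordEquiv F N (replicate p down ++ replicate q up)
      (replicate q up ++ replicate p down) by
    simpa [valleyWord, peakWord] using h.append_append (replicate m flip) []
  induction q with
  | zero => simpa using WordEquiv.refl _
  | succ q ih =>
    have h := ((wordEquiv_up_replicate_down (F := F) (N := N) p).symm.append_append []
      (replicate q up)).trans (ih.cons up)
    simpa [replicate_succ] using h

theorem exists_wordEquiv_valleyWord (L : List BStep) :
    ∃ m p q, WordEquiv F N L (valleyWord m p q) := by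
  induction L with
  | nil => exact ⟨0, 0, 0, WordEquiv.refl _⟩
  | cons s L ih =>
    obtain ⟨m, p, q, h⟩ := ih
    have hs : WordEquiv F N (s :: L)
        (replicate m flip ++ BStep.reflect^[m] s :: (replicate p down ++ replicate q up)) := by
      have hm := (wordEquiv_cons_replicate_flip (F := F) (N := N) s m).append_append []
        (replicate p down ++ replicate q up)
      simp only [List.nil_append, List.cons_append, List.append_assoc] at hm
      exact (h.cons s).trans (by simpa [valleyWord] using hm)
    cases hr : BStep.reflect^[m] s with
    | up =>
      refine ⟨m, p, q + 1, hs.trans ?_⟩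
      simpa [hr, valleyWord, replicate_succ] using
        (wordEquiv_up_replicate_down (F := F) (N := N) p).append_append (replicate m flip)
          (replicate q up)
    | down => exact ⟨m, p + 1, q, by simpa [hr, valleyWord, replicate_succ] using hs⟩
    | flip => exact ⟨m + 1, p, q, by simpa [hr, valleyWord, replicate_succ'] using hs⟩

end NormalForm

def Admissible (N : ℕ) (a j : ℤ) (r : ℕ) : Prop :=
  |a - j| ≤ (r : ℤ) ∧ (r : ℤ) ≤ (N : ℤ) - 1 - |(N : ℤ) + 1 - a - j| ∧ (r : ℤ) % 2 = (a - j) % 2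

lemma Admissible.of_bounds {N : ℕ} {a : ℤ} {p q : ℕ} (hp : 1 ≤ a - p) (hq : a + q ≤ N) :
    Admissible N a (a - p + q) (p + q) := by
  refine ⟨?_, ?_, ?_⟩
  · rw [abs_le]; push_cast; omega
  · rcases abs_cases ((N : ℤ) + 1 - a - (a - p + q)) with ⟨he, _⟩ | ⟨he, _⟩ <;>
      rw [he] <;> push_cast <;> omega
  · push_cast; omega

section Arithmetic

variable {N : ℕ} {i j : ℤ} {k : ℕ}

lemma targetY_replicate_flip (a : ℤ) (m : ℕ) :
    targetY N a (replicate m flip) = if Even m then a else N + 1 - a := by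
  induction m generalizing a with
  | zero => simp [targetY]
  | succ m ih =>
    rw [replicate_succ', targetY_append, ih]
    by_cases hm : Even m <;> simp [hm, Nat.even_add_one, targetY, stepNext]

lemma targetY_replicate_down (a : ℤ) (p : ℕ) : targetY N a (replicate p down) = a - p := by
  induction p generalizing a with
  | zero => simp [targetY]
  | succ p ih => rw [replicate_succ, targetY, ih, stepNext]; push_cast; ring

lemma targetY_replicate_up (a : ℤ) (q : ℕ) : targetY N a (replicate q up) = a + q := by
  induction q generalizing a with
  | zero => simp [targetY]
  | succ q ih => rw [replicate_succ, targetY, ih, stepNext]; push_cast; ring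

lemma degY_replicate (s : BStep) (m : ℕ) : degY N (replicate m s) = m * stepDeg N s := by
  simp [degY]

lemma IsPathFromY.valleyWord_bounds {m p q : ℕ} (h : IsPathFromY N i j k (valleyWord m p q)) :
    1 ≤ targetY N i (replicate m flip) - p ∧ targetY N i (replicate m flip) - p + q = j ∧
      m * N + (p + q) = k := by
  obtain ⟨hok, ht, hd⟩ := h
  simp only [valleyWord, okStepsY_append] at hok
  simp only [valleyWord, targetY_append, targetY_replicate_down, targetY_replicate_up] at ht
  simp only [valleyWord, degY_append, degY_replicate, stepDeg] at hd
  have hlow := hok.1.2.targetY_bounds.1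
  rw [targetY_replicate_down] at hlow
  exact ⟨hlow, ht, by linarith⟩

lemma IsPathFromY.peakWord_bound {m p q : ℕ} (h : IsPathFromY N i j k (peakWord m p q)) :
    targetY N i (replicate m flip) + q ≤ N := by
  have hok := h.1
  simp only [peakWord, okStepsY_append] at hok
  simpa only [targetY_replicate_up] using hok.1.2.targetY_bounds.2

theorem valleyWord_params {m p q : ℕ} (hv : IsPathFromY N i j k (valleyWord m p q))
    (hp : IsPathFromY N i j k (peakWord m p q)) :
    k / N = m ∧ k % N = p + q ∧ targetY N i (replicate m flip) - p + q = j ∧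
      Admissible N (targetY N i (replicate m flip)) j (p + q) := by
  obtain ⟨hlow, hj, hk⟩ := hv.valleyWord_bounds
  have hhigh := hp.peakWord_bound
  have hpq : p + q < N := by omega
  subst hj hk
  refine ⟨?_, ?_, rfl, Admissible.of_bounds hlow hhigh⟩
  · rw [add_comm, Nat.add_mul_div_right _ _ (by omega), Nat.div_eq_of_lt hpq, zero_add]
  · rw [add_comm, Nat.add_mul_mod_self_right, Nat.mod_eq_of_lt hpq]

end Arithmetic

section Classes

variable {F : Type*} [Field F] {N : ℕ} {i j : ℤ} {k : ℕ}

theorem exists_valleyWord_of_wordClass_ne_zero {L : List BStep} (h : wordClass F N i j k L ≠ 0) :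
    ∃ m p q, wordClass F N i j k L = wordClass F N i j k (valleyWord m p q) ∧
      IsPathFromY N i j k (valleyWord m p q) ∧ IsPathFromY N i j k (peakWord m p q) := by
  obtain ⟨m, p, q, hL⟩ := exists_wordEquiv_valleyWord (F := F) (N := N) L
  have hv := hL.wordClass_eq i j k
  have hp := (wordEquiv_valleyWord_peakWord (F := F) (N := N) m p q).wordClass_eq i j k
  exact ⟨m, p, q, hv, isPathFromY_of_wordClass_ne_zero (hv ▸ h),
    isPathFromY_of_wordClass_ne_zero (hp ▸ hv ▸ h)⟩

theorem wordClass_eq_of_ne_zero {L L' : List BStep} (h : wordClass F N i j k L ≠ 0)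
    (h' : wordClass F N i j k L' ≠ 0) : wordClass F N i j k L = wordClass F N i j k L' := by
  obtain ⟨m, p, q, hL, hv, hp⟩ := exists_valleyWord_of_wordClass_ne_zero h
  obtain ⟨m', p', q', hL', hv', hp'⟩ := exists_valleyWord_of_wordClass_ne_zero h'
  obtain ⟨hm, hpq, hj, -⟩ := valleyWord_params hv hp
  obtain ⟨hm', hpq', hj', -⟩ := valleyWord_params hv' hp'
  obtain rfl : m = m' := hm.symm.trans hm'
  obtain ⟨rfl, rfl⟩ : p = p' ∧ q = q' := by omega
  rw [hL, hL']

theorem span_range_wordClass :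
    Submodule.span F (Set.range (wordClass F N i j k)) = ⊤ := by
  let π : (PathIdxY N i j k →₀ F) →ₗ[F] PathCompY F N i j k := Submodule.mkQ _
  have hpath : Set.range (pathClassY F) = π '' Set.range Finsupp.basisSingleOne := by
    rw [← Set.range_comp, Finsupp.coe_basisSingleOne]
    rfl
  refine eq_top_mono (Submodule.span_mono (s := Set.range (pathClassY F)) ?_) ?_
  · rintro _ ⟨p, rfl⟩
    exact ⟨p.1, dif_pos p.2⟩
  · rw [hpath, Submodule.span_image, Finsupp.basisSingleOne.span_eq, Submodule.map_top,
      LinearMap.range_eq_top]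
    exact Submodule.mkQ_surjective _

end Classes

theorem stmt12_general (F : Type*) [Field F] (N : ℕ) (i j : ℤ) (k : ℕ) :
    Module.finrank F (PathCompY F N i j k) ≤ 1 ∧
    (Module.finrank F (PathCompY F N i j k) = 1 →
      ((Even (k / N) ∧
          |i - j| ≤ ((k % N : ℕ) : ℤ) ∧
          ((k % N : ℕ) : ℤ) ≤ (N : ℤ) - 1 - |(N : ℤ) + 1 - i - j| ∧
          ((k % N : ℕ) : ℤ) % 2 = (i - j) % 2) ∨
        (¬ Even (k / N) ∧
          |((N : ℤ) + 1 - i) - j| ≤ ((k % N : ℕ) : ℤ) ∧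
          ((k % N : ℕ) : ℤ) ≤ (N : ℤ) - 1 - |(N : ℤ) + 1 - ((N : ℤ) + 1 - i) - j| ∧
          ((k % N : ℕ) : ℤ) % 2 = (((N : ℤ) + 1 - i) - j) % 2))) := by
  have hspan := span_range_wordClass (F := F) (N := N) (i := i) (j := j) (k := k)
  refine ⟨finrank_le_one_of_span_eq_top hspan fun _ _ => wordClass_eq_of_ne_zero, fun hrank => ?_⟩
  have := Module.nontrivial_of_finrank_eq_succ hrank
  obtain ⟨L, hL⟩ := exists_ne_zero_of_span_eq_top hspan
  obtain ⟨m, p, q, -, hv, hp⟩ := exists_valleyWord_of_wordClass_ne_zero hL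
  obtain ⟨hdiv, hmod, -, hadm⟩ := valleyWord_params hv hp
  rw [hdiv, hmod]
  rw [targetY_replicate_flip] at hadm
  by_cases hm : Even m
  · rw [if_pos hm] at hadm
    exact Or.inl ⟨hm, hadm⟩
  · rw [if_neg hm] at hadm
    exact Or.inr ⟨hm, hadm⟩

/-- `dim_F e_i Γ_k e_j ≤ 1`, and it equals `1` only if, writing `k = qN + r` with
`0 ≤ r < N`, either `q` is even and `|i−j| ≤ r ≤ N−1−|N+1−i−j|` with
`r ≡ i−j (mod 2)`, or `q` is odd and the same condition holds with `i` replaced by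
`N+1−i`. -/
theorem stmt12 (F : Type*) [Field F] (N : ℕ) (hN : 2 ≤ N) (i j : ℤ)
    (hi : 1 ≤ i) (hiN : i ≤ (N : ℤ)) (hj : 1 ≤ j) (hjN : j ≤ (N : ℤ)) (k : ℕ) :
    Module.finrank F (PathCompY F N i j k) ≤ 1 ∧
    (Module.finrank F (PathCompY F N i j k) = 1 →
      ((Even (k / N) ∧
          |i - j| ≤ ((k % N : ℕ) : ℤ) ∧
          ((k % N : ℕ) : ℤ) ≤ (N : ℤ) - 1 - |(N : ℤ) + 1 - i - j| ∧
          ((k % N : ℕ) : ℤ) % 2 = (i - j) % 2) ∨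
        (¬ Even (k / N) ∧
          |((N : ℤ) + 1 - i) - j| ≤ ((k % N : ℕ) : ℤ) ∧
          ((k % N : ℕ) : ℤ) ≤ (N : ℤ) - 1 - |(N : ℤ) + 1 - ((N : ℤ) + 1 - i) - j| ∧
          ((k % N : ℕ) : ℤ) % 2 = (((N : ℤ) + 1 - i) - j) % 2))) :=
  stmt12_general F N i j k
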